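/- arXiv:2109.09867 — 5 statements merged into one kernel-verified Lean document; each statement's English description precedes it below -/
import Mathlib

section
/- Let A be a unital Banach algebra and let α be a norm on A ⊗ M_n(ℂ) making it a unital Banach algebra. If there exists a constant C > 0 such that α(a ⊗ E₁₁) ≤ C‖a‖ for all a ∈ A, then the identity map from (A ⊗ M_n(ℂ), ‖·‖₁) to (A ⊗ M_n(ℂ), α) is a Banach algebra isomorphism (i.e., the two norms are equivalent). -/
/-!
Writing `a ⊗ E_ij = (1 ⊗ E_i1)(a ⊗ E_11)(1 ⊗ E_1j)`, submultiplicativity of `α` and the bound on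
`a ⊗ E_11` give `α(a ⊗ E_ij) ≤ L ‖a‖`, hence `α ≤ L ‖·‖₁`. The `ℓ¹`-norm is equivalent to the
complete entrywise sup norm and `α` is complete, so by the open mapping theorem the identity
also has a bounded inverse.
-/

open scoped BigOperators

/-- the `ℓ¹`-norm `‖Σ a_ij ⊗ E_ij‖₁ = Σ ‖a_ij‖` on `A ⊗ M_n(ℂ)` -/
noncomputable def l1MatNorm {n : ℕ} {A : Type*} [NormedRing A]
    (x : Matrix (Fin n) (Fin n) A) : ℝ :=
  ∑ i, ∑ j, ‖x i j‖

/-- `ν` is a norm on `A ⊗ M_n(ℂ)` making it a unital Banach algebra. -/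
structure IsBanachAlgebraNorm (n : ℕ) (A : Type*) [NormedRing A] [NormedAlgebra ℂ A]
    (ν : Matrix (Fin n) (Fin n) A → ℝ) : Prop where
  nonneg : ∀ x, 0 ≤ ν x
  eq_zero_iff : ∀ x, ν x = 0 ↔ x = 0
  add_le : ∀ x y, ν (x + y) ≤ ν x + ν y
  smul_eq : ∀ (c : ℂ) (x), ν (c • x) = ‖c‖ * ν x
  mul_le : ∀ x y, ν (x * y) ≤ ν x * ν y
  complete : ∀ u : ℕ → Matrix (Fin n) (Fin n) A,
    (∀ ε : ℝ, 0 < ε → ∃ N, ∀ m ≥ N, ∀ k ≥ N, ν (u m - u k) < ε) →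
    ∃ x, ∀ ε : ℝ, 0 < ε → ∃ N, ∀ m ≥ N, ν (u m - x) < ε

open Matrix

lemma l1MatNorm_nonneg {n : ℕ} {A : Type*} [NormedRing A] (x : Matrix (Fin n) (Fin n) A) :
    0 ≤ l1MatNorm x :=
  Finset.sum_nonneg fun _ _ => Finset.sum_nonneg fun _ _ => norm_nonneg _

lemma l1MatNorm_of_le_sq_mul_norm {n : ℕ} {A : Type*} [NormedRing A] (x : Fin n → Fin n → A) :
    l1MatNorm (of x) ≤ (n : ℝ) ^ 2 * ‖x‖ :=
  calc l1MatNorm (of x) ≤ ∑ _i : Fin n, ∑ _j : Fin n, ‖x‖ :=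
        Finset.sum_le_sum fun i _ => Finset.sum_le_sum fun j _ =>
          (norm_le_pi_norm (x i) j).trans (norm_le_pi_norm x i)
    _ = (n : ℝ) ^ 2 * ‖x‖ := by simp [sq, mul_assoc]

def MatrixWithNorm (n : ℕ) (A : Type*) (_ν : Matrix (Fin n) (Fin n) A → ℝ) : Type _ :=
  Matrix (Fin n) (Fin n) A

noncomputable section

namespace MatrixWithNorm

variable {n : ℕ} {A : Type*} [NormedRing A] [NormedAlgebra ℂ A]
  {ν : Matrix (Fin n) (Fin n) A → ℝ}

instance : AddCommGroup (MatrixWithNorm n A ν) :=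
  inferInstanceAs (AddCommGroup (Matrix (Fin n) (Fin n) A))

instance : Module ℂ (MatrixWithNorm n A ν) :=
  inferInstanceAs (Module ℂ (Matrix (Fin n) (Fin n) A))

instance : Norm (MatrixWithNorm n A ν) := ⟨ν⟩

variable (n A ν) in
def ofEntries : (Fin n → Fin n → A) ≃ₗ[ℂ] MatrixWithNorm n A ν := LinearEquiv.refl ℂ _

lemma norm_ofEntries (x : Fin n → Fin n → A) : ‖ofEntries n A ν x‖ = ν (of x) := rfl

lemma normedSpaceCore (hν : IsBanachAlgebraNorm n A ν) :
    NormedSpace.Core ℂ (MatrixWithNorm n A ν) where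
  norm_nonneg := hν.nonneg
  norm_smul := hν.smul_eq
  norm_triangle := hν.add_le
  norm_eq_zero_iff := hν.eq_zero_iff

variable [hν : Fact (IsBanachAlgebraNorm n A ν)]

instance : NormedAddCommGroup (MatrixWithNorm n A ν) :=
  .ofCore (normedSpaceCore hν.out)

instance : NormedSpace ℂ (MatrixWithNorm n A ν) := .ofCore (normedSpaceCore hν.out)

instance : CompleteSpace (MatrixWithNorm n A ν) := by
  refine Metric.complete_of_cauchySeq_tendsto fun u hu => ?_
  obtain ⟨x, hx⟩ := hν.out.complete u fun ε hε => by
    obtain ⟨N, hN⟩ := Metric.cauchySeq_iff.mp hu ε hε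
    exact ⟨N, fun m hm k hk => (dist_eq_norm (u m) (u k)).symm.trans_lt (hN m hm k hk)⟩
  refine ⟨x, Metric.tendsto_atTop.mpr fun ε hε => ?_⟩
  obtain ⟨N, hN⟩ := hx ε hε
  exact ⟨N, fun m hm => (dist_eq_norm (u m) x).trans_lt (hN m hm)⟩

end MatrixWithNorm

end

namespace IsBanachAlgebraNorm

variable {n : ℕ} {A : Type*} [NormedRing A] [NormedAlgebra ℂ A]
  {ν : Matrix (Fin n) (Fin n) A → ℝ}

lemma sum_le (hν : IsBanachAlgebraNorm n A ν) {ι : Type*} (s : Finset ι)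
    (f : ι → Matrix (Fin n) (Fin n) A) : ν (∑ i ∈ s, f i) ≤ ∑ i ∈ s, ν (f i) := by
  classical
  induction s using Finset.induction with
  | empty => simp [(hν.eq_zero_iff 0).mpr rfl]
  | insert a s h ih =>
    rw [Finset.sum_insert h, Finset.sum_insert h]
    exact (hν.add_le _ _).trans (add_le_add_right ih _)

lemma le_mul_l1MatNorm (hν : IsBanachAlgebraNorm n A ν) {M : ℝ}
    (hM : ∀ i j (a : A), ν (single i j a) ≤ M * ‖a‖) (x : Matrix (Fin n) (Fin n) A) :
    ν x ≤ M * l1MatNorm x :=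
  calc ν x = ν (∑ i, ∑ j, single i j (x i j)) := by rw [← matrix_eq_sum_single]
    _ ≤ ∑ i, ∑ j, ν (single i j (x i j)) :=
        (hν.sum_le _ _).trans (Finset.sum_le_sum fun i _ => hν.sum_le _ _)
    _ ≤ ∑ i, ∑ j, M * ‖x i j‖ :=
        Finset.sum_le_sum fun i _ => Finset.sum_le_sum fun j _ => hM i j (x i j)
    _ = M * l1MatNorm x := by simp only [l1MatNorm, Finset.mul_sum]

lemma single_le_mul (hν : IsBanachAlgebraNorm n A ν) (i j k : Fin n) (a : A) :
    ν (single i j a) ≤ ν (single i k 1) * ν (single k k a) * ν (single k j 1) := by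
  have hfactor : single i j a = single i k 1 * single k k a * single k j 1 := by
    rw [single_mul_single_same, single_mul_single_same, one_mul, mul_one]
  rw [hfactor]
  exact (hν.mul_le _ _).trans (mul_le_mul_of_nonneg_right (hν.mul_le _ _) (hν.nonneg _))

lemma le_mul_l1MatNorm_of_single_le (hν : IsBanachAlgebraNorm n A ν) {k : Fin n} {C : ℝ}
    (hC : 0 ≤ C) (hk : ∀ a : A, ν (single k k a) ≤ C * ‖a‖) (x : Matrix (Fin n) (Fin n) A) :
    ν x ≤ C * (∑ i, ν (single i k 1)) * (∑ j, ν (single k j 1)) * l1MatNorm x := by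
  set c := ∑ i, ν (single i k 1)
  set d := ∑ j, ν (single k j 1)
  have hc : ∀ i, ν (single i k 1) ≤ c := fun i =>
    Finset.single_le_sum (fun i _ => hν.nonneg (single i k 1)) (Finset.mem_univ i)
  have hd : ∀ j, ν (single k j 1) ≤ d := fun j =>
    Finset.single_le_sum (fun j _ => hν.nonneg (single k j 1)) (Finset.mem_univ j)
  have hc₀ : 0 ≤ c := (hν.nonneg _).trans (hc k)
  refine hν.le_mul_l1MatNorm (fun i j a => ?_) x
  calc ν (single i j a) ≤ ν (single i k 1) * ν (single k k a) * ν (single k j 1) :=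
        hν.single_le_mul i j k a
    _ ≤ c * (C * ‖a‖) * d :=
        mul_le_mul (mul_le_mul (hc i) (hk a) (hν.nonneg _) hc₀) (hd j) (hν.nonneg _)
          (by positivity)
    _ = C * c * d * ‖a‖ := by ring

lemma exists_l1MatNorm_le_mul [CompleteSpace A] (hν : IsBanachAlgebraNorm n A ν) {L : ℝ}
    (hL₀ : 0 ≤ L) (hL : ∀ x, ν x ≤ L * l1MatNorm x) :
    ∃ K, 0 < K ∧ ∀ x, l1MatNorm x ≤ K * ν x := by
  have : Fact (IsBanachAlgebraNorm n A ν) := ⟨hν⟩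
  let e := MatrixWithNorm.ofEntries n A ν
  have he : ∀ x, ‖e x‖ ≤ (L * n ^ 2) * ‖x‖ := fun x =>
    calc ‖e x‖ = ν (of x) := MatrixWithNorm.norm_ofEntries x
      _ ≤ L * (n ^ 2 * ‖x‖) := (hL _).trans (by gcongr; exact l1MatNorm_of_le_sq_mul_norm x)
      _ = (L * n ^ 2) * ‖x‖ := by ring
  -- Open mapping theorem: the bounded bijection `e` between Banach spaces has a bounded inverse.
  obtain ⟨K, hK⟩ : ∃ K, AntilipschitzWith K e :=
    ⟨_, (e.toContinuousLinearEquivOfContinuous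
      (AddMonoidHomClass.continuous_of_bound e _ he)).antilipschitz⟩
  refine ⟨n ^ 2 * K + 1, by positivity, fun x => ?_⟩
  calc l1MatNorm x ≤ n ^ 2 * ‖of.symm x‖ := l1MatNorm_of_le_sq_mul_norm (of.symm x)
    _ ≤ n ^ 2 * (K * ν x) := by gcongr; exact hK.le_mul_norm (map_zero e) (of.symm x)
    _ ≤ (n ^ 2 * K + 1) * ν x := by nlinarith [hν.nonneg x]

end IsBanachAlgebraNorm

/-- If `α` is a Banach algebra norm on `A ⊗ M_n(ℂ)` with
`α(a ⊗ E₁₁) ≤ C ‖a‖`, then the identity map `(A ⊗ M_n(ℂ), ‖·‖₁) → (A ⊗ M_n(ℂ), α)` is a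
Banach algebra isomorphism, i.e. the two norms are equivalent. -/
theorem stmt0 {n : ℕ} [NeZero n] {A : Type*} [NormedRing A] [NormedAlgebra ℂ A]
    [CompleteSpace A] (ν : Matrix (Fin n) (Fin n) A → ℝ)
    (hν : IsBanachAlgebraNorm n A ν) (C : ℝ) (hC : 0 < C)
    (hbound : ∀ a : A, ν (Matrix.single 0 0 a) ≤ C * ‖a‖) :
    ∃ K L : ℝ, 0 < K ∧ 0 < L ∧ ∀ x : Matrix (Fin n) (Fin n) A,
      K * l1MatNorm x ≤ ν x ∧ ν x ≤ L * l1MatNorm x := by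
  set L := C * (∑ i, ν (single i 0 1)) * (∑ j, ν (single 0 j 1))
  have hL₀ : 0 ≤ L := mul_nonneg (mul_nonneg hC.le (Finset.sum_nonneg fun i _ => hν.nonneg _))
    (Finset.sum_nonneg fun j _ => hν.nonneg _)
  have hupper : ∀ x, ν x ≤ L * l1MatNorm x := hν.le_mul_l1MatNorm_of_single_le hC.le hbound
  obtain ⟨K, hK, hlower⟩ := hν.exists_l1MatNorm_le_mul hL₀ hupper
  refine ⟨K⁻¹, L + 1, inv_pos.2 hK, by positivity, fun x => ⟨?_, ?_⟩⟩
  · rw [inv_mul_le_iff₀ hK]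
    exact hlower x
  · exact (hupper x).trans (mul_le_mul_of_nonneg_right (lt_add_one L).le
      (l1MatNorm_nonneg x))
end

section
/- Let 1 ∈ A ⊂ B be an inclusion of unital Banach algebras, and suppose there is an A-bimodule map E : B → A of index-finite type with a quasi-basis of n pairs, i.e., there exist (u_i, v_i) ∈ B × B, i = 1,…,n, with Σ_i u_i E(v_i b) = b = Σ_i E(b u_i) v_i for all b ∈ B. Then ltsr(B) ≤ ltsr(A) + n − 1. -/
/-!
Every `b ∈ B` equals `∑ i, E (b * u i) * v i`, so each `k`-tuple over `B` is the image of a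
`k × n` matrix over `A` under `x ↦ x *ᵥ v`; since `1 = ∑ i, E (u i) * v i`, this map sends left
invertible matrices to tuples generating `B` as a left ideal. It therefore suffices that left
invertible `(m + n - 1) × n` matrices over `A` are dense whenever `Lg A m` is. This goes by
induction on `n`: a matrix whose last column, with its last entry removed, is unimodular is
brought to `diag(Y, 1)` by invertible row and column operations, and `Y` is approximated by the
induction hypothesis.
-/

open scoped BigOperators

/-- `Lg A n`: n-tuples generating `A` as a left ideal. -/
def Lg (A : Type*) [Ring A] (n : ℕ) : Set (Fin n → A) :=
  {v | ∃ c : Fin n → A, ∑ i, c i * v i = 1}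

/-- left topological stable rank -/
noncomputable def ltsr (A : Type*) [Ring A] [TopologicalSpace A] : ℕ∞ :=
  sInf ((fun n : ℕ => (n : ℕ∞)) '' {n | Dense (Lg A n)})

open Matrix Set

def leftInvertibles (ι κ R : Type*) [Fintype ι] [DecidableEq κ] [Ring R] : Set (Matrix ι κ R) :=
  {a | ∃ c : Matrix κ ι R, c * a = 1}

section Algebra

variable {R : Type*} [Ring R] {ι κ ν : Type*}

theorem leftInvertibles_eq_univ [Fintype ι] [DecidableEq κ] [IsEmpty κ] :
    leftInvertibles ι κ R = univ :=
  eq_univ_of_forall fun _ => ⟨0, Subsingleton.elim _ _⟩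

theorem mul_mem_leftInvertibles [Fintype ι] [Fintype κ] [DecidableEq κ] [DecidableEq ν]
    {a : Matrix ι κ R} {b : Matrix κ ν R}
    (ha : a ∈ leftInvertibles ι κ R) (hb : b ∈ leftInvertibles κ ν R) :
    a * b ∈ leftInvertibles ι ν R := by
  obtain ⟨c, hc⟩ := ha
  obtain ⟨d, hd⟩ := hb
  exact ⟨d * c, by rw [Matrix.mul_assoc, ← Matrix.mul_assoc c, hc, Matrix.one_mul, hd]⟩

theorem fromBlocks_one_zero_mem_leftInvertibles [Fintype ι] [Fintype κ] [DecidableEq ι]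
    [DecidableEq κ] (C : Matrix κ ι R) :
    fromBlocks 1 0 C 1 ∈ leftInvertibles (ι ⊕ κ) (ι ⊕ κ) R :=
  ⟨fromBlocks 1 0 (-C) 1, by simp [fromBlocks_multiply, ← fromBlocks_one]⟩

theorem fromBlocks_mem_leftInvertibles [Fintype ι] [Fintype ν] [DecidableEq κ] [DecidableEq ν]
    {Y : Matrix ι κ R} (hY : Y ∈ leftInvertibles ι κ R) :
    fromBlocks Y 0 0 (1 : Matrix ν ν R) ∈ leftInvertibles (ι ⊕ ν) (κ ⊕ ν) R := by
  obtain ⟨c, hc⟩ := hY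
  exact ⟨fromBlocks c 0 0 1, by simp [fromBlocks_multiply, hc]⟩

theorem exists_fromBlocks_eq_mul_fromBlocks_mul [Fintype ι] [Fintype κ] [Fintype ν]
    [DecidableEq ι] [DecidableEq κ] [DecidableEq ν] (P : Matrix ι κ R) (q : Matrix ι ν R)
    (r : Matrix ν κ R) (s : Matrix ν ν R) (hq : q ∈ leftInvertibles ι ν R) :
    ∃ (g : Matrix (ι ⊕ ν) (ι ⊕ ν) R) (Y : Matrix ι κ R) (h : Matrix (κ ⊕ ν) (κ ⊕ ν) R),
      g ∈ leftInvertibles _ _ R ∧ h ∈ leftInvertibles _ _ R ∧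
      fromBlocks P q r s = g * fromBlocks Y 0 0 (1 : Matrix ν ν R) * h := by
  obtain ⟨c, hc⟩ := hq
  -- adding `d` times the upper rows to the lower ones turns the corner `s` into `1`
  set d := (1 - s) * c
  have hdq : d * q = 1 - s := by rw [Matrix.mul_assoc, hc, Matrix.mul_one]
  obtain ⟨r', hr'⟩ : ∃ r', r' = r + d * P := ⟨_, rfl⟩
  refine ⟨fromBlocks 1 q (-d) s, P - q * r', fromBlocks 1 0 r' 1,
    ⟨fromBlocks (1 - q * d) (-q) d 1, ?_⟩, fromBlocks_one_zero_mem_leftInvertibles r', ?_⟩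
  · rw [fromBlocks_multiply, ← fromBlocks_one]
    congr 1 <;> simp [Matrix.sub_mul, Matrix.mul_sub, Matrix.mul_assoc, hdq]
  · have hr : r = -(d * (P - q * r')) + s * r' := by
      rw [Matrix.mul_sub, ← Matrix.mul_assoc, hdq, Matrix.sub_mul, Matrix.one_mul, hr']
      abel
    rw [fromBlocks_multiply, fromBlocks_multiply]
    congr 1 <;> simp [hr]

end Algebra

section Topology

variable {R : Type*} [Ring R] [TopologicalSpace R] {ι ι' κ κ' ν : Type*}

theorem mul_mul_mem_closure_leftInvertibles [IsTopologicalSemiring R] [Fintype ι] [Fintype ι']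
    [Fintype κ] [DecidableEq ι] [DecidableEq κ] [DecidableEq κ']
    {g : Matrix ι' ι R} {x : Matrix ι κ R} {h : Matrix κ κ' R}
    (hg : g ∈ leftInvertibles ι' ι R) (hx : x ∈ closure (leftInvertibles ι κ R))
    (hh : h ∈ leftInvertibles κ κ' R) : g * x * h ∈ closure (leftInvertibles ι' κ' R) :=
  map_mem_closure (f := fun y => g * y * h) (by fun_prop) hx fun _ hy =>
    mul_mem_leftInvertibles (mul_mem_leftInvertibles hg hy) hh

theorem fromBlocks_mem_closure_leftInvertibles [IsTopologicalSemiring R] [Fintype ι] [Fintype κ]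
    [Fintype ν] [DecidableEq ι] [DecidableEq κ] [DecidableEq ν]
    (hL : Dense (leftInvertibles ι κ R)) (P : Matrix ι κ R) {q : Matrix ι ν R} (r : Matrix ν κ R)
    (s : Matrix ν ν R) (hq : q ∈ leftInvertibles ι ν R) :
    fromBlocks P q r s ∈ closure (leftInvertibles (ι ⊕ ν) (κ ⊕ ν) R) := by
  obtain ⟨g, Y, h, hg, hh, hgYh⟩ := exists_fromBlocks_eq_mul_fromBlocks_mul P q r s hq
  rw [hgYh]
  exact mul_mul_mem_closure_leftInvertibles hg
    (map_mem_closure (f := fun Y => fromBlocks Y 0 0 (1 : Matrix ν ν R)) (by fun_prop) (hL Y)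
      fun _ => fromBlocks_mem_leftInvertibles) hh

theorem Dense.leftInvertibles_sum [IsTopologicalSemiring R] [Fintype ι] [Fintype κ]
    [Fintype ν] [DecidableEq ι] [DecidableEq κ] [DecidableEq ν]
    (hκ : Dense (leftInvertibles ι κ R)) (hν : Dense (leftInvertibles ι ν R)) :
    Dense (leftInvertibles (ι ⊕ ν) (κ ⊕ ν) R) := by
  intro a
  rw [← fromBlocks_toBlocks a, ← closure_closure]
  exact map_mem_closure (f := fun q => fromBlocks a.toBlocks₁₁ q a.toBlocks₂₁ a.toBlocks₂₂)
    (by fun_prop) (hν _) fun _ => fromBlocks_mem_closure_leftInvertibles hκ _ _ _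

theorem Dense.leftInvertibles_reindex [Fintype ι] [Fintype ι'] [DecidableEq κ] [DecidableEq κ']
    (e : ι ≃ ι') (f : κ ≃ κ') (h : Dense (leftInvertibles ι κ R)) :
    Dense (leftInvertibles ι' κ' R) := by
  refine ((reindex e f).surjective.denseRange.dense_image (by fun_prop) h).mono ?_
  rintro _ ⟨a, ⟨c, hc⟩, rfl⟩
  exact ⟨reindex f e c, by simp [reindex_apply, submatrix_mul_equiv, hc]⟩

theorem Dense.leftInvertibles_sum_rows [Fintype ι] [Fintype ι'] [DecidableEq κ]
    (h : Dense (leftInvertibles ι κ R)) : Dense (leftInvertibles (ι ⊕ ι') κ R) := by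
  have hsurj : Function.Surjective fun p : Matrix ι κ R × Matrix ι' κ R => fromRows p.1 p.2 :=
    fun a => ⟨(a.toRows₁, a.toRows₂), fromRows_toRows a⟩
  refine (hsurj.denseRange.dense_image (continuous_matrix ?_) (h.prod dense_univ)).mono ?_
  · rintro (i | i) j <;> simp only [fromRows_apply_inl, fromRows_apply_inr] <;> fun_prop
  · rintro _ ⟨⟨a, b⟩, ⟨⟨c, hc⟩, -⟩, rfl⟩
    exact ⟨fromCols c 0, by simp [fromCols_mul_fromRows, hc]⟩

theorem Dense.leftInvertibles_fin_one {k : ℕ} (h : Dense (Lg R k)) :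
    Dense (leftInvertibles (Fin k) (Fin 1) R) := by
  have hsurj : Function.Surjective (replicateCol (Fin 1) : (Fin k → R) → _) :=
    fun a => ⟨fun i => a i 0, by ext i j; fin_cases j; rfl⟩
  refine (hsurj.denseRange.dense_image (by fun_prop) h).mono ?_
  rintro _ ⟨v, ⟨c, hc⟩, rfl⟩
  exact ⟨replicateRow (Fin 1) c, by ext i j; fin_cases i; fin_cases j; simp [dotProduct, hc]⟩

end Topology

section StableRank

variable {R : Type*} [Ring R] [TopologicalSpace R]

theorem dense_leftInvertibles_add [IsTopologicalSemiring R] {m : ℕ} (hm : Dense (Lg R m))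
    (n : ℕ) : Dense (leftInvertibles (Fin (m + n)) (Fin (n + 1)) R) := by
  induction n with
  | zero => exact hm.leftInvertibles_fin_one
  | succ n ih =>
    have hcol : Dense (leftInvertibles (Fin (m + n)) (Fin 1) R) :=
      hm.leftInvertibles_fin_one.leftInvertibles_sum_rows.leftInvertibles_reindex
        finSumFinEquiv (Equiv.refl _)
    exact (ih.leftInvertibles_sum hcol).leftInvertibles_reindex
      (finSumFinEquiv (m := m + n) (n := 1)) finSumFinEquiv

theorem dense_leftInvertibles_add_sub_one [IsTopologicalSemiring R] {m : ℕ}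
    (hm : Dense (Lg R m)) : ∀ n : ℕ, Dense (leftInvertibles (Fin (m + n - 1)) (Fin n) R)
  | 0 => by simp [leftInvertibles_eq_univ]
  | n + 1 => by simpa using dense_leftInvertibles_add hm n

theorem ltsr_le_of_dense {n : ℕ} (h : Dense (Lg R n)) : ltsr R ≤ n :=
  sInf_le ⟨n, h, rfl⟩

theorem exists_dense_lg_eq_ltsr (h : ltsr R ≠ ⊤) : ∃ m : ℕ, Dense (Lg R m) ∧ ltsr R = m := by
  have hne : ((fun n : ℕ => (n : ℕ∞)) '' {n | Dense (Lg R n)}).Nonempty :=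
    nonempty_iff_ne_empty.2 fun he => h (by rw [ltsr, he, sInf_empty])
  obtain ⟨m, hm, hmeq⟩ := csInf_mem hne
  exact ⟨m, hm, hmeq.symm⟩

end StableRank

theorem dense_lg_of_forall_exists_sum_eq {A B : Type*} [Ring A] [TopologicalSpace A] [Ring B]
    [TopologicalSpace B] [IsTopologicalSemiring B] (f : A →+* B) (hf : Continuous f) {k n : ℕ}
    (v : Fin n → B) (hv : ∀ b, ∃ a : Fin n → A, ∑ i, f (a i) * v i = b)
    (hA : Dense (leftInvertibles (Fin k) (Fin n) A)) : Dense (Lg B k) := by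
  obtain ⟨w, hw⟩ := hv 1
  choose a ha using hv
  intro β
  have hβ : (of fun j i => a (β j) i).map f *ᵥ v = β := funext fun j => ha (β j)
  rw [← hβ]
  refine map_mem_closure (f := fun x => x.map f *ᵥ v) (by fun_prop) (hA _) ?_
  rintro x ⟨c, hc⟩
  refine ⟨(fun i => f (w i)) ᵥ* c.map f, ?_⟩
  change (fun i => f (w i)) ᵥ* c.map f ⬝ᵥ x.map f *ᵥ v = 1
  rw [← dotProduct_mulVec, mulVec_mulVec, ← Matrix.map_mul, hc,
    Matrix.map_one _ f.map_zero f.map_one, one_mulVec]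
  exact hw

theorem stmt4_general {B : Type*} [NormedRing B] (A : Subring B) (E : B → A) (n : ℕ) (u v : Fin n → B)
    (hquasi : ∀ b : B, (∑ i, u i * ((E (v i * b) : A) : B)) = b ∧
      (∑ i, ((E (b * u i) : A) : B) * v i) = b) :
    ltsr B ≤ ltsr A + (n : ℕ∞) - 1 := by
  obtain htop | htop := eq_or_ne (ltsr A) ⊤
  · simp [htop]
  obtain ⟨m, hm, hmA⟩ := exists_dense_lg_eq_ltsr htop
  have hB : Dense (Lg B (m + n - 1)) :=
    dense_lg_of_forall_exists_sum_eq A.subtype continuous_subtype_val v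
      (fun b => ⟨fun i => E (b * u i), (hquasi b).2⟩) (dense_leftInvertibles_add_sub_one hm n)
  calc ltsr B ≤ ((m + n - 1 : ℕ) : ℕ∞) := ltsr_le_of_dense hB
    _ = ltsr A + n - 1 := by rw [hmA, ENat.natCast_sub, Nat.cast_add, Nat.cast_one]

/-- For an inclusion `1 ∈ A ⊆ B` of unital Banach algebras with an
`A`-bimodule map `E : B → A` of index-finite type with quasi-basis `{(u_i, v_i)}_{i=1}^n`,
one has `ltsr(B) ≤ ltsr(A) + n - 1`. -/
theorem stmt4 {B : Type*} [NormedRing B] [CompleteSpace B] (A : Subring B)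
    (hA : IsClosed (A : Set B)) (E : B → A) (hEcont : Continuous E)
    (hEadd : ∀ x y : B, E (x + y) = E x + E y)
    (hEleft : ∀ (a : A) (b : B), E ((a : B) * b) = a * E b)
    (hEright : ∀ (a : A) (b : B), E (b * (a : B)) = E b * a)
    (n : ℕ) (u v : Fin n → B)
    (hquasi : ∀ b : B, (∑ i, u i * ((E (v i * b) : A) : B)) = b ∧
      (∑ i, ((E (b * u i) : A) : B) * v i) = b) :
    ltsr B ≤ ltsr A + (n : ℕ∞) - 1 :=
  stmt4_general A E n u v hquasi
end

section
/- Let G be a discrete group, A a unital Banach algebra, α an action of G on A, and E : ℓ¹(G, A, α) → A the canonical map E(Σ f_g δ^g) = f_e. Set u_g = δ^g and v_g = δ^{g⁻¹}. Then for any finitely supported b = Σ_g b_g δ^g in ℓ¹(G, A, α), one has b = Σ_g u_g * E(v_g * b) = Σ_g E(b * u_g) * v_g. In particular, if G is finite, {(u_g, v_g)}_{g∈G} is a quasi-basis for E and Index E = Σ_g u_g * v_g = |G| δ^e. -/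
open scoped BigOperators

/-- twisted convolution product of the `ℓ¹`-crossed product -/
noncomputable def conv {G : Type*} [Group G] {A : Type*} [NormedRing A]
    (α : G →* RingAut A) (f₁ f₂ : G → A) : G → A :=
  fun g => ∑' h, f₁ h * α h (f₂ (h⁻¹ * g))

/-- the point mass `δ^g` -/
def deltaFn (G : Type*) [Group G] [DecidableEq G] (A : Type*) [NormedRing A] (g : G) :
    G → A :=
  fun h => if h = g then 1 else 0

/-- the canonical conditional expectation `E(Σ f_g δ^g) = f_e δ^e` -/
def Efn (G : Type*) [Group G] [DecidableEq G] (A : Type*) [NormedRing A] :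
    (G → A) → (G → A) :=
  fun f g => if g = 1 then f 1 else 0

/-- the embedding `A ∋ a ↦ a δ^e ∈ ℓ¹(G, A, α)` -/
def aDelta (G : Type*) [Group G] [DecidableEq G] (A : Type*) [NormedRing A] (a : A) :
    G → A :=
  fun g => if g = 1 then a else 0

/-!
Convolving with a point mass is a translation (twisted by `α` when the point mass is on the
left), so `u_g * E(v_g * b)` and `E(b * u_g) * v_g` are the single coordinates `b_g δ^g` and
`b_{g⁻¹} δ^{g⁻¹}` of `b`; summing the coordinates of a finitely supported `b` gives back `b`.
Likewise `δ^g * δ^{g⁻¹} = δ^e` for every `g`, so the index is `|G| δ^e`.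
-/

theorem finsum_pi_single_self {ι M : Type*} [DecidableEq ι] [AddCommMonoid M] {b : ι → M}
    (hb : (Function.support b).Finite) : ∑ᶠ i, Pi.single i (b i) = b := by
  have hsupp : (Function.support fun i => Pi.single i (b i)) ⊆ hb.toFinset := by
    intro i hi
    simpa using hi
  rw [finsum_eq_finsetSum_of_support_subset _ hsupp]
  funext x
  rw [Finset.sum_apply, Finset.sum_pi_single]
  split_ifs with hx
  · rfl
  · exact (Function.notMem_support.mp (by simpa using hx)).symm

section CrossedProduct

variable {G : Type*} [Group G] [DecidableEq G] {A : Type*} [NormedRing A]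
  (α : G →* RingAut A)

theorem deltaFn_eq_single (g : G) : deltaFn G A g = Pi.single g 1 := by
  funext x
  simp [deltaFn, Pi.single_apply]

theorem Efn_eq_single (f : G → A) : Efn G A f = Pi.single 1 (f 1) := by
  funext x
  simp [Efn, Pi.single_apply]

theorem conv_single_left (g : G) (a : A) (f : G → A) :
    conv α (Pi.single g a) f = fun x => a * α g (f (g⁻¹ * x)) := by
  funext x
  rw [conv, tsum_eq_single g fun h hne => by simp [hne]]
  simp

theorem conv_single_right (g : G) (a : A) (f : G → A) :
    conv α f (Pi.single g a) = fun x => f (x * g⁻¹) * α (x * g⁻¹) a := by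
  funext x
  rw [conv, tsum_eq_single (x * g⁻¹) fun h hne => ?_]
  · simp
  · have : h⁻¹ * x ≠ g := fun h' => hne (by rw [← h']; group)
    simp [this]

theorem conv_deltaFn_left (g : G) (f : G → A) :
    conv α (deltaFn G A g) f = fun x => α g (f (g⁻¹ * x)) := by
  simp [deltaFn_eq_single, conv_single_left]

theorem conv_deltaFn_right (g : G) (f : G → A) :
    conv α f (deltaFn G A g) = fun x => f (x * g⁻¹) := by
  simp [deltaFn_eq_single, conv_single_right]

theorem conv_deltaFn_deltaFn (g h : G) :
    conv α (deltaFn G A g) (deltaFn G A h) = deltaFn G A (g * h) := by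
  funext x
  simp [conv_deltaFn_left, deltaFn, inv_mul_eq_iff_eq_mul, apply_ite (α g)]

theorem conv_deltaFn_Efn_conv_deltaFn_inv (b : G → A) (g : G) :
    conv α (deltaFn G A g) (Efn G A (conv α (deltaFn G A g⁻¹) b)) = Pi.single g (b g) := by
  funext x
  simp [conv_deltaFn_left, Efn_eq_single, Pi.single_apply, inv_mul_eq_one, eq_comm,
    apply_ite (α g)]

theorem conv_Efn_conv_deltaFn_deltaFn_inv (b : G → A) (g : G) :
    conv α (Efn G A (conv α b (deltaFn G A g))) (deltaFn G A g⁻¹) = Pi.single g⁻¹ (b g⁻¹) := by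
  funext x
  simp [conv_deltaFn_right, Efn_eq_single, Pi.single_apply, mul_eq_one_iff_eq_inv]

end CrossedProduct

theorem stmt7_general {G : Type*} [Group G] [DecidableEq G] {A : Type*} [NormedRing A]
    (α : G →* RingAut A) (b : G → A)
    (hb : (Function.support b).Finite) :
    (∑ᶠ g : G, conv α (deltaFn G A g) (Efn G A (conv α (deltaFn G A g⁻¹) b))) = b ∧
    (∑ᶠ g : G, conv α (Efn G A (conv α b (deltaFn G A g))) (deltaFn G A g⁻¹)) = b ∧
    (∀ (hG : Fintype G),
      (∑ g ∈ @Finset.univ G hG, conv α (deltaFn G A g) (deltaFn G A g⁻¹)) =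
        fun h => if h = 1 then ((@Fintype.card G hG : ℕ) : A) else 0) := by
  refine ⟨?_, ?_, fun hG => ?_⟩
  · simp only [conv_deltaFn_Efn_conv_deltaFn_inv]
    exact finsum_pi_single_self hb
  · simp only [conv_Efn_conv_deltaFn_deltaFn_inv]
    exact (finsum_comp_equiv (Equiv.inv G) (f := fun g => Pi.single g (b g))).trans
      (finsum_pi_single_self hb)
  · simp only [conv_deltaFn_deltaFn, mul_inv_cancel, Finset.sum_const, Finset.card_univ]
    funext h
    simp [deltaFn, nsmul_eq_mul]

/-- With `u_g = δ^g`, `v_g = δ^{g⁻¹}` and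
`E(Σ f_g δ^g) = f_e δ^e`, every finitely supported `b ∈ ℓ¹(G, A, α)` satisfies
`b = Σ_g u_g * E(v_g * b) = Σ_g E(b * u_g) * v_g`; in particular for finite `G`,
`{(u_g, v_g)}` is a quasi-basis for `E` and `Index E = Σ_g u_g * v_g = |G| δ^e`. -/
theorem stmt7 {G : Type*} [Group G] [DecidableEq G] {A : Type*} [NormedRing A]
    [CompleteSpace A] (α : G →* RingAut A) (b : G → A)
    (hb : (Function.support b).Finite) :
    (∑ᶠ g : G, conv α (deltaFn G A g) (Efn G A (conv α (deltaFn G A g⁻¹) b))) = b ∧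
    (∑ᶠ g : G, conv α (Efn G A (conv α b (deltaFn G A g))) (deltaFn G A g⁻¹)) = b ∧
    (∀ (hG : Fintype G),
      (∑ g ∈ @Finset.univ G hG, conv α (deltaFn G A g) (deltaFn G A g⁻¹)) =
        fun h => if h = 1 then ((@Fintype.card G hG : ℕ) : A) else 0) :=
  stmt7_general α b hb
end

section
/- Let G be a finite group of order n, A a unital Banach algebra, and α an action of G on A. Then the map π : ℓ¹(G, A, α) → A ⊗ M_n(ℂ), defined by π(Σ_g f_g δ^g) = Σ_{h,g ∈ G} α^h(f_g) ⊗ e_{h, hg}, is an injective algebra homomorphism, where {e_{g,h}} are the matrix units of M_n(ℂ) indexed by G. -/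
open scoped BigOperators

/-- the regular representation `π(Σ_g f_g δ^g) = Σ_{h,g} α^h(f_g) ⊗ e_{h,hg}`,
identifying `A ⊗ M_n(ℂ)` with `G × G` matrices over `A` -/
noncomputable def piRep {G : Type*} [Group G] [Fintype G] [DecidableEq G] {A : Type*}
    [NormedRing A] (α : G →* RingAut A) (f : G → A) : Matrix G G A :=
  fun h k => α h (f (h⁻¹ * k))

/-!
The entry `(h, k)` of `π f` is `α^h (f (h⁻¹ k))`, so the row of `π f` at `1` is `f` itself, which
gives injectivity. Multiplicativity is the covariance `α^h ∘ α^m = α^{hm}` after substituting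
`l = h m` in the matrix product `∑_l α^h (f₁ (h⁻¹ l)) α^l (f₂ (l⁻¹ k))`.
-/

theorem MonoidHom.ringAut_apply_apply {G A : Type*} [Monoid G] [Mul A] [Add A]
    (α : G →* RingAut A) (h m : G) (x : A) : α h (α m x) = α (h * m) x := by
  rw [map_mul, RingAut.mul_apply]

section

variable {G : Type*} [Group G] [Fintype G] [DecidableEq G] {A : Type*} [NormedRing A]
  (α : G →* RingAut A)

theorem piRep_apply_one_left (f : G → A) (g : G) : piRep α f 1 g = f g := by
  simp [piRep]

theorem piRep_injective : Function.Injective (piRep α) := fun f₁ f₂ h =>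
  funext fun g => by rw [← piRep_apply_one_left α f₁, h, piRep_apply_one_left]

theorem piRep_add (f₁ f₂ : G → A) : piRep α (f₁ + f₂) = piRep α f₁ + piRep α f₂ := by
  ext h k
  simp [piRep]

theorem piRep_conv (f₁ f₂ : G → A) :
    piRep α (conv α f₁ f₂) = piRep α f₁ * piRep α f₂ := by
  ext h k
  calc piRep α (conv α f₁ f₂) h k
      = ∑ m, α h (f₁ m) * α (h * m) (f₂ ((h * m)⁻¹ * k)) := by
        simp only [piRep, conv, tsum_fintype, map_sum, map_mul,
          MonoidHom.ringAut_apply_apply, mul_inv_rev, mul_assoc]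
    _ = ∑ l, α h (f₁ (h⁻¹ * l)) * α l (f₂ (l⁻¹ * k)) :=
        Fintype.sum_equiv (Equiv.mulLeft h) _ _ fun m => by simp
    _ = (piRep α f₁ * piRep α f₂) h k := rfl

theorem piRep_deltaFn_one : piRep α (deltaFn G A 1) = 1 := by
  ext h k
  by_cases hk : h = k <;>
    simp [piRep, deltaFn, Matrix.one_apply, hk, inv_mul_eq_one]

end

theorem stmt8_general {G : Type*} [Group G] [Fintype G] [DecidableEq G] {A : Type*}
    [NormedRing A] (α : G →* RingAut A) :
    Function.Injective (piRep α) ∧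
    (∀ f₁ f₂ : G → A, piRep α (conv α f₁ f₂) = piRep α f₁ * piRep α f₂) ∧
    (∀ f₁ f₂ : G → A, piRep α (f₁ + f₂) = piRep α f₁ + piRep α f₂) ∧
    piRep α (deltaFn G A 1) = 1 :=
  ⟨piRep_injective α, piRep_conv α, piRep_add α, piRep_deltaFn_one α⟩

/-- For a finite group `G` of order `n`, the map
`π : ℓ¹(G, A, α) → A ⊗ M_n(ℂ)`, `π(Σ_g f_g δ^g) = Σ_{h,g} α^h(f_g) ⊗ e_{h,hg}`, is an
injective unital algebra homomorphism. -/
theorem stmt8 {G : Type*} [Group G] [Fintype G] [DecidableEq G] {A : Type*}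
    [NormedRing A] [CompleteSpace A] (α : G →* RingAut A) :
    Function.Injective (piRep α) ∧
    (∀ f₁ f₂ : G → A, piRep α (conv α f₁ f₂) = piRep α f₁ * piRep α f₂) ∧
    (∀ f₁ f₂ : G → A, piRep α (f₁ + f₂) = piRep α f₁ + piRep α f₂) ∧
    piRep α (deltaFn G A 1) = 1 :=
  stmt8_general α
end

section
/- Let A be a tsr boundedly divisible unital Banach algebra, i.e., there is a constant K > 0 such that for every positive integer m there is an integer n ≥ m and a Banach algebra D with tsr(D) ≤ K and A ≅ M_n(D). Then ltsr(A) ≤ 2. -/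
open scoped BigOperators

universe u

/-- a realization `A ≅ M_n(D)` (as Banach algebras) with `tsr(D) ≤ K` -/
structure MatrixDecomp (A : Type u) [NormedRing A] (n K : ℕ) : Type (u + 1) where
  /-- the coefficient Banach algebra -/
  D : Type u
  [instD : NormedRing D]
  [instDc : CompleteSpace D]
  /-- the algebra isomorphism `A ≅ M_n(D)` -/
  iso : A ≃+* Matrix (Fin n) (Fin n) D
  cont : Continuous iso
  cont_symm : Continuous iso.symm
  tsr_le : ltsr D ≤ (K : ℕ∞)

/-!
If unimodular `q`-tuples are dense in `D`, then left-invertible `ρ × κ` matrices over `D` are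
dense as soon as `q + |κ| ≤ |ρ|`. Induct on `|κ|`: perturb the last column of `T` so that its
top `|ρ| - 1` entries are left unimodular; two transvections `U` then turn that column into the
last basis vector, so `U * T = fromBlocks B 0 r 1`, and approximating `B` by left-invertible
matrices approximates `U * T`, hence `T`.
A pair in `M_n(D)` generates `M_n(D)` as a left ideal exactly when the stacked `2n × n` matrix
is left invertible, so taking `A ≅ M_n(D)` with `n ≥ K ≥ ltsr D` makes generating pairs of `A`
dense.
-/

open Matrix Set Function

theorem exists_dense_lg_of_ltsr_le {D : Type*} [Ring D] [TopologicalSpace D] {K : ℕ}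
    (h : ltsr D ≤ K) : ∃ q ≤ K, Dense (Lg D q) := by
  have hne : ((fun n : ℕ => (n : ℕ∞)) '' {n | Dense (Lg D n)}).Nonempty := by
    by_contra hempty
    rw [Set.not_nonempty_iff_eq_empty] at hempty
    simp [ltsr, hempty] at h
  obtain ⟨q, hq, hltsr⟩ := csInf_mem hne
  refine ⟨q, ?_, hq⟩
  rw [ltsr, ← hltsr] at h
  exact Nat.cast_le.mp h

theorem dense_lg_of_le {D : Type*} [Ring D] [TopologicalSpace D] {q m : ℕ}
    (hq : Dense (Lg D q)) (hqm : q ≤ m) : Dense (Lg D m) := by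
  let e := Fin.castLEEmb hqm
  intro v
  have hcont : Continuous fun w : Fin q → D => extend e w v := by
    refine continuous_pi fun i => ?_
    by_cases hi : ∃ k, e k = i
    · obtain ⟨k, rfl⟩ := hi
      simpa only [e.injective.extend_apply] using continuous_apply k
    · simpa only [extend_apply' _ _ _ hi] using continuous_const
  have hmaps : MapsTo (fun w => extend e w v) (Lg D q) (Lg D m) := by
    rintro w ⟨c, hc⟩
    refine ⟨extend e c 0, hc ▸ (Fintype.sum_of_injective e e.injective _ _ ?_ ?_).symm⟩
    · rintro i hi
      rw [extend_apply' _ _ _ hi, Pi.zero_apply, zero_mul]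
    · intro k
      simp only [e.injective.extend_apply]
  have hv : extend e (v ∘ e) v = v := by
    funext i
    by_cases hi : ∃ k, e k = i
    · obtain ⟨k, rfl⟩ := hi
      exact e.injective.extend_apply _ _ k
    · exact extend_apply' _ _ _ hi
  simpa only [hv] using map_mem_closure hcont (hq (v ∘ e)) hmaps

section Ring

variable {D : Type*} [Ring D]

theorem isUnit_one_add_vecMulVec {ρ : Type*} [Fintype ρ] [DecidableEq ρ] {a b : ρ → D}
    (h : b ⬝ᵥ a = 0) : IsUnit (1 + vecMulVec a b) :=
  IsNilpotent.isUnit_one_add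
    ⟨2, by rw [pow_two, vecMulVec_mul_vecMulVec, h, zero_smul, vecMulVec_zero]⟩

theorem exists_unit_mulVec_eq_single {ρ : Type*} [Fintype ρ] [DecidableEq ρ] (p : ρ)
    {c v : ρ → D} (hcp : c p = 0) (hcv : c ⬝ᵥ v = 1) :
    ∃ U : (Matrix ρ ρ D)ˣ, U *ᵥ v = Pi.single p 1 := by
  set w := v + Pi.single p (1 - v p)
  have hw : (1 + vecMulVec (Pi.single p (1 - v p)) c) *ᵥ v = w := by
    rw [add_mulVec, one_mulVec, vecMulVec_mulVec, hcv, MulOpposite.op_one, one_smul]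
  have hwp : w p = 1 := by simp [w]
  have hw' : (1 + vecMulVec (Pi.single p 1 - w) (Pi.single p 1)) *ᵥ w = Pi.single p 1 := by
    rw [add_mulVec, one_mulVec, vecMulVec_mulVec, single_dotProduct, hwp, one_mul,
      MulOpposite.op_one, one_smul, add_sub_cancel]
  obtain ⟨U₁, hU₁⟩ := isUnit_one_add_vecMulVec (a := Pi.single p (1 - v p)) (b := c)
    (by rw [dotProduct_single, hcp, zero_mul])
  obtain ⟨U₂, hU₂⟩ := isUnit_one_add_vecMulVec (a := Pi.single p 1 - w) (b := Pi.single p 1)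
    (by rw [single_dotProduct, one_mul, Pi.sub_apply, hwp, Pi.single_eq_same, sub_self])
  exact ⟨U₂ * U₁, by rw [Units.val_mul, hU₁, hU₂, ← mulVec_mulVec, hw, hw']⟩

def leftInvertibleMatrices (ρ κ D : Type*) [Ring D] [Fintype ρ] [DecidableEq κ] :
    Set (Matrix ρ κ D) :=
  {T | ∃ S : Matrix κ ρ D, S * T = 1}

variable {ρ κ ι : Type*} [Fintype ρ] [DecidableEq κ]

theorem units_mul_mem_leftInvertibleMatrices [DecidableEq ρ] (U : (Matrix ρ ρ D)ˣ)
    {T : Matrix ρ κ D} (hT : T ∈ leftInvertibleMatrices ρ κ D) :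
    (U : Matrix ρ ρ D) * T ∈ leftInvertibleMatrices ρ κ D := by
  obtain ⟨S, hS⟩ := hT
  refine ⟨S * ((U⁻¹ : (Matrix ρ ρ D)ˣ) : Matrix ρ ρ D), ?_⟩
  rw [Matrix.mul_assoc, ← Matrix.mul_assoc _ (U : Matrix ρ ρ D), U.inv_mul, Matrix.one_mul, hS]

theorem fromBlocks_mem_leftInvertibleMatrices [Fintype κ] [Fintype ι] [DecidableEq ι]
    {B : Matrix ρ κ D} (hB : B ∈ leftInvertibleMatrices ρ κ D) (r : Matrix ι κ D) :
    fromBlocks B 0 r 1 ∈ leftInvertibleMatrices (ρ ⊕ ι) (κ ⊕ ι) D := by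
  obtain ⟨W, hW⟩ := hB
  refine ⟨fromBlocks W 0 (-(r * W)) 1, ?_⟩
  rw [fromBlocks_multiply, Matrix.neg_mul, Matrix.mul_assoc, hW]
  simp [fromBlocks_one]

end Ring

section Topology

variable {D : Type*} [Ring D] [TopologicalSpace D]

theorem Dense.leftInvertibleMatrices_reindex {ρ κ ρ' κ' : Type*} [Fintype ρ] [DecidableEq κ]
    [Fintype ρ'] [DecidableEq κ'] (e₁ : ρ ≃ ρ') (e₂ : κ ≃ κ')
    (h : Dense (leftInvertibleMatrices ρ κ D)) : Dense (leftInvertibleMatrices ρ' κ' D) := by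
  have hcont : Continuous (reindex e₁ e₂ : Matrix ρ κ D → Matrix ρ' κ' D) :=
    continuous_id.matrix_submatrix _ _
  refine ((reindex e₁ e₂).surjective.denseRange.dense_image hcont h).mono ?_
  rintro _ ⟨T, ⟨S, hS⟩, rfl⟩
  refine ⟨reindex e₂ e₁ S, ?_⟩
  rw [reindex_apply, reindex_apply, submatrix_mul_equiv, hS, submatrix_one_equiv]

theorem fromBlocks_mem_closure_leftInvertibleMatrices {ρ κ ι : Type*} [Fintype ρ] [Fintype κ]
    [DecidableEq κ] [Fintype ι] [DecidableEq ι] (hB : Dense (leftInvertibleMatrices ρ κ D))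
    (B : Matrix ρ κ D) (r : Matrix ι κ D) :
    fromBlocks B 0 r 1 ∈ closure (leftInvertibleMatrices (ρ ⊕ ι) (κ ⊕ ι) D) :=
  map_mem_closure (f := fun B => fromBlocks B 0 r 1)
    (continuous_id.matrix_fromBlocks continuous_const continuous_const continuous_const)
    (hB B) fun _ hB => fromBlocks_mem_leftInvertibleMatrices hB r

variable [ContinuousAdd D] [ContinuousMul D]

theorem mem_closure_leftInvertibleMatrices_of_lg {m : ℕ} {κ : Type*} [Fintype κ]
    [DecidableEq κ] (hB : Dense (leftInvertibleMatrices (Fin m) κ D))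
    (T : Matrix (Fin m ⊕ Fin 1) (κ ⊕ Fin 1) D)
    (hT : (fun i => T (.inl i) (.inr 0)) ∈ Lg D m) :
    T ∈ closure (leftInvertibleMatrices (Fin m ⊕ Fin 1) (κ ⊕ Fin 1) D) := by
  obtain ⟨c, hc⟩ := hT
  obtain ⟨U, hU⟩ := exists_unit_mulVec_eq_single (.inr 0) (c := Sum.elim c 0)
    (v := T.col (.inr 0)) rfl (by simpa [dotProduct, Fintype.sum_sum_type] using hc)
  set M : Matrix (Fin m ⊕ Fin 1) (κ ⊕ Fin 1) D :=
    (U : Matrix (Fin m ⊕ Fin 1) (Fin m ⊕ Fin 1) D) * T with hM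
  have hcol : ∀ i j, M i (.inr j) = (Pi.single (.inr 0) 1 : Fin m ⊕ Fin 1 → D) i := by
    intro i j
    rw [Subsingleton.elim j 0, ← hU]
    rfl
  have hM_blocks : M = fromBlocks M.toBlocks₁₁ 0 M.toBlocks₂₁ 1 := by
    ext (i | i) (j | j)
    · rfl
    · simp [hcol]
    · rfl
    · rw [hcol, Subsingleton.elim i 0, Subsingleton.elim j 0]
      simp
  have hM_mem : M ∈ closure (leftInvertibleMatrices (Fin m ⊕ Fin 1) (κ ⊕ Fin 1) D) := by
    rw [hM_blocks]
    exact fromBlocks_mem_closure_leftInvertibleMatrices hB _ _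
  have hT : T = ((U⁻¹ : (Matrix (Fin m ⊕ Fin 1) (Fin m ⊕ Fin 1) D)ˣ) :
      Matrix (Fin m ⊕ Fin 1) (Fin m ⊕ Fin 1) D) * M := by
    rw [hM, ← Matrix.mul_assoc, U.inv_mul, Matrix.one_mul]
  rw [hT]
  exact map_mem_closure (continuous_const.matrix_mul continuous_id) hM_mem
    fun _ hX => units_mul_mem_leftInvertibleMatrices U⁻¹ hX

theorem dense_leftInvertibleMatrices_sum_fin_one {m : ℕ} {κ : Type*} [Fintype κ]
    [DecidableEq κ] (hm : Dense (Lg D m)) (hB : Dense (leftInvertibleMatrices (Fin m) κ D)) :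
    Dense (leftInvertibleMatrices (Fin m ⊕ Fin 1) (κ ⊕ Fin 1) D) := by
  intro T
  let f : (Fin m → D) → Matrix (Fin m ⊕ Fin 1) (κ ⊕ Fin 1) D := fun w =>
    fromBlocks T.toBlocks₁₁ (replicateCol (Fin 1) w) T.toBlocks₂₁ T.toBlocks₂₂
  have hf : Continuous f :=
    continuous_const.matrix_fromBlocks continuous_id.matrix_replicateCol continuous_const
      continuous_const
  have hfT : f (fun i => T (.inl i) (.inr 0)) = T := by
    ext (i | i) (j | j)
    · rfl
    · simp [f, Subsingleton.elim j 0]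
    · rfl
    · rfl
  rw [← hfT, ← closure_closure]
  exact map_mem_closure hf (hm _) fun w hw =>
    mem_closure_leftInvertibleMatrices_of_lg hB (f w) hw

theorem dense_leftInvertibleMatrices_fin {q : ℕ} (hq : Dense (Lg D q)) :
    ∀ {m k : ℕ}, q + k ≤ m → Dense (leftInvertibleMatrices (Fin m) (Fin k) D)
  | _, 0, _ => by
    convert dense_univ
    exact Set.eq_univ_of_forall fun T => ⟨0, by ext i j; exact i.elim0⟩
  | m, k + 1, hqkm => by
    obtain ⟨m, rfl⟩ : ∃ m', m = m' + 1 := ⟨m - 1, by omega⟩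
    exact (dense_leftInvertibleMatrices_sum_fin_one (dense_lg_of_le hq (by omega))
      (dense_leftInvertibleMatrices_fin hq (by omega))).leftInvertibleMatrices_reindex
        finSumFinEquiv finSumFinEquiv

theorem dense_leftInvertibleMatrices {q : ℕ} (hq : Dense (Lg D q)) {ρ κ : Type*} [Fintype ρ]
    [Fintype κ] [DecidableEq κ] (h : q + Fintype.card κ ≤ Fintype.card ρ) :
    Dense (leftInvertibleMatrices ρ κ D) :=
  (dense_leftInvertibleMatrices_fin hq h).leftInvertibleMatrices_reindex
    (Fintype.equivFin ρ).symm (Fintype.equivFin κ).symm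

end Topology

theorem dense_lg_matrix {D : Type*} [Ring D] [TopologicalSpace D] {k : ℕ} {ι : Type*}
    [Fintype ι] [DecidableEq ι] (h : Dense (leftInvertibleMatrices (Fin k × ι) ι D)) :
    Dense (Lg (Matrix ι ι D) k) := by
  let Φ : Matrix (Fin k × ι) ι D ≃ₜ (Fin k → Matrix ι ι D) := Homeomorph.piCurry
  refine (Φ.surjective.denseRange.dense_image Φ.continuous h).mono ?_
  rintro _ ⟨T, ⟨S, hS⟩, rfl⟩
  refine ⟨fun a => of fun i l => S i (a, l), ?_⟩
  ext i j
  calc (∑ a, (of fun i l => S i (a, l)) * Φ T a) i j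
      = ∑ a, ∑ l, S i (a, l) * T (a, l) j := by simp only [Matrix.sum_apply, mul_apply]; rfl
    _ = (1 : Matrix ι ι D) i j := by rw [← hS, mul_apply, Fintype.sum_prod_type]

theorem dense_lg_of_surjective {R A : Type*} [Ring R] [TopologicalSpace R] [Ring A]
    [TopologicalSpace A] (f : R →+* A) (hf : Continuous f) (hsurj : Surjective f) {k : ℕ}
    (h : Dense (Lg R k)) : Dense (Lg A k) := by
  refine (hsurj.comp_left.denseRange.dense_image (continuous_pi fun i =>
    hf.comp (continuous_apply i)) h).mono ?_
  rintro _ ⟨v, ⟨c, hc⟩, rfl⟩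
  refine ⟨f ∘ c, ?_⟩
  rw [← map_one f, ← hc, map_sum]
  simp only [Function.comp_apply, map_mul]

theorem stmt13_general {A : Type u} [NormedRing A] (K : ℕ)
    (h : ∀ m : ℕ, ∃ n : ℕ, m ≤ n ∧ Nonempty (MatrixDecomp A n K)) :
    ltsr A ≤ 2 := by
  obtain ⟨n, hKn, ⟨dec⟩⟩ := h K
  let _ := dec.instD
  obtain ⟨q, hqK, hq⟩ := exists_dense_lg_of_ltsr_le dec.tsr_le
  have hLI : Dense (leftInvertibleMatrices (Fin 2 × Fin n) (Fin n) dec.D) :=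
    dense_leftInvertibleMatrices hq (by simp only [Fintype.card_prod, Fintype.card_fin]; omega)
  have hA : Dense (Lg A 2) :=
    dense_lg_of_surjective dec.iso.symm.toRingHom dec.cont_symm dec.iso.symm.surjective
      (dense_lg_matrix hLI)
  exact sInf_le ⟨2, hA, rfl⟩

/-- A tsr boundedly divisible unital Banach algebra `A` (for some
`K > 0`, for every `m` there is `n ≥ m` with `A ≅ M_n(D)` and `tsr(D) ≤ K`) has
`ltsr(A) ≤ 2`. -/
theorem stmt13 {A : Type u} [NormedRing A] [CompleteSpace A] (K : ℕ) (hK : 0 < K)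
    (h : ∀ m : ℕ, ∃ n : ℕ, m ≤ n ∧ Nonempty (MatrixDecomp A n K)) :
    ltsr A ≤ 2 :=
  stmt13_general K h
end
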